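/- arXiv:2303.00375 — 2 statements merged into one kernel-verified Lean document; each statement's English description precedes it below -/
import Mathlib

section
/- For all integers q ≥ p ≥ r ≥ 2 and k ≥ 0, one has t_r(kq + q, k(p−1) + p) ≥ t_r(q, p). -/
open Filter

/-- An r-uniform hypergraph `G` on vertex set `Fin n` has the (q,p)-property if every
q-element vertex subset `A` contains a p-element subset `B` such that every
r-element subset of `B` is an edge of `G`. -/
def HasLocalProperty {n : ℕ} (G : Finset (Finset (Fin n))) (r q p : ℕ) : Prop :=
  ∀ A : Finset (Fin n), A.card = q →
    ∃ B ⊆ A, B.card = p ∧ ∀ e ⊆ B, e.card = r → e ∈ G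

/-- `minEdges r n q p` = T_r(n,q,p): the minimum number of edges of an n-vertex
r-uniform hypergraph having the (q,p)-property. -/
noncomputable def minEdges (r n q p : ℕ) : ℕ :=
  sInf {m | ∃ G : Finset (Finset (Fin n)), (∀ e ∈ G, e.card = r) ∧
    HasLocalProperty G r q p ∧ G.card = m}

/-- `tDensity r q p` = t_r(q,p) = lim_{n→∞} T_r(n,q,p)/C(n,r), which equals the
supremum since the sequence is nondecreasing and bounded. -/
noncomputable def tDensity (r q p : ℕ) : ℝ :=
  ⨆ n : ℕ, (minEdges r n q p : ℝ) / (n.choose r)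

open Topology

/-! ### Auxiliary lemmas -/

lemma TD.complete_mem (r n q p : ℕ) (hpq : p ≤ q) :
    (n.choose r) ∈ {m | ∃ G : Finset (Finset (Fin n)), (∀ e ∈ G, e.card = r) ∧
      HasLocalProperty G r q p ∧ G.card = m} := by
  refine ⟨Finset.univ.powersetCard r, fun e he => (Finset.mem_powersetCard.mp he).2, ?_, ?_⟩
  · intro A hA
    obtain ⟨B, hBA, hB⟩ := Finset.exists_subset_card_eq (s := A) (n := p) (by rw [hA]; exact hpq)
    exact ⟨B, hBA, hB, fun e _ hcard =>
      Finset.mem_powersetCard.mpr ⟨Finset.subset_univ e, hcard⟩⟩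
  · rw [Finset.card_powersetCard, Finset.card_univ, Fintype.card_fin]

lemma TD.minEdges_le_choose (r n q p : ℕ) (hpq : p ≤ q) :
    minEdges r n q p ≤ n.choose r :=
  Nat.sInf_le (TD.complete_mem r n q p hpq)

lemma TD.minEdges_spec (r n q p : ℕ) (hpq : p ≤ q) :
    ∃ G : Finset (Finset (Fin n)), (∀ e ∈ G, e.card = r) ∧
      HasLocalProperty G r q p ∧ G.card = minEdges r n q p :=
  Nat.sInf_mem ⟨_, TD.complete_mem r n q p hpq⟩

/-- Pullback of a hypergraph along an injection, when the local property holds for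
all `q`-sets inside the range. -/
lemma TD.pullback_le {r q p m N : ℕ} (ι : Fin m ↪ Fin N) (G : Finset (Finset (Fin N)))
    (hG : ∀ e ∈ G, e.card = r)
    (hloc : ∀ A : Finset (Fin N), A.card = q → A ⊆ Finset.univ.map ι →
      ∃ B ⊆ A, B.card = p ∧ ∀ e ⊆ B, e.card = r → e ∈ G) :
    minEdges r m q p ≤ (G.filter (fun E => E ⊆ Finset.univ.map ι)).card := by
  classical
  set G' : Finset (Finset (Fin m)) := Finset.univ.filter (fun e => e.map ι ∈ G) with hG'
  have hmem : ∀ e, e ∈ G' ↔ e.map ι ∈ G := by intro e; simp [hG']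
  have h1 : minEdges r m q p ≤ G'.card := by
    apply Nat.sInf_le
    refine ⟨G', ?_, ?_, rfl⟩
    · intro e he
      have := hG _ ((hmem e).mp he)
      rwa [Finset.card_map] at this
    · intro A hA
      obtain ⟨B, hBA, hBcard, hBcl⟩ := hloc (A.map ι) (by rw [Finset.card_map]; exact hA)
        (Finset.map_subset_map.mpr (Finset.subset_univ A))
      obtain ⟨B₀, hB₀A, rfl⟩ := Finset.subset_map_iff.mp hBA
      refine ⟨B₀, hB₀A, by rw [Finset.card_map] at hBcard; exact hBcard, ?_⟩
      intro e he hecard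
      exact (hmem e).mpr (hBcl (e.map ι) (Finset.map_subset_map.mpr he)
        (by rw [Finset.card_map]; exact hecard))
  refine h1.trans (Finset.card_le_card_of_injOn (fun e => e.map ι) ?_ ?_)
  · intro e he
    rw [Finset.mem_coe, Finset.mem_filter]
    exact ⟨(hmem e).mp he, Finset.map_subset_map.mpr (Finset.subset_univ e)⟩
  · intro a _ b _ h
    exact Finset.map_injective ι h

lemma TD.choose_identity (n r : ℕ) : (n + 1 - r) * (n + 1).choose r = (n + 1) * n.choose r := by
  have h1 := Nat.add_one_mul_choose_eq n r
  have h2 := Nat.choose_succ_right_eq (n + 1) r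
  rw [Nat.mul_comm, ← h2]
  exact h1.symm

lemma TD.key_mono (r q p n : ℕ) (hpq : p ≤ q) :
    (n + 1) * minEdges r n q p ≤ (n + 1 - r) * minEdges r (n + 1) q p := by
  classical
  obtain ⟨G, hGr, hGloc, hGcard⟩ := TD.minEdges_spec r (n + 1) q p hpq
  have hv : ∀ v : Fin (n + 1), minEdges r n q p ≤ (G.filter (fun E => v ∉ E)).card := by
    intro v
    have hrange : ∀ x : Fin (n+1), x ∈ Finset.univ.map (Fin.succAboveEmb v) ↔ x ≠ v := by
      intro x
      simp only [Finset.mem_map, Finset.mem_univ, true_and]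
      constructor
      · rintro ⟨a, rfl⟩; exact Fin.succAbove_ne v a
      · intro h; exact Fin.exists_succAbove_eq h
    have hpb := TD.pullback_le (Fin.succAboveEmb v) G hGr (fun A hA _ => hGloc A hA)
    refine hpb.trans (Finset.card_le_card ?_)
    intro E hE
    rw [Finset.mem_filter] at hE ⊢
    refine ⟨hE.1, fun hvE => ?_⟩
    exact ((hrange v).mp (hE.2 hvE)) rfl
  have hsum : ∑ v : Fin (n + 1), (G.filter (fun E => v ∉ E)).card = (n + 1 - r) * G.card := by
    calc ∑ v : Fin (n + 1), (G.filter (fun E => v ∉ E)).card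
        = ∑ v : Fin (n + 1), ∑ E ∈ G, if v ∉ E then 1 else 0 := by
          refine Finset.sum_congr rfl fun v _ => ?_
          exact Finset.card_filter _ _
      _ = ∑ E ∈ G, ∑ v : Fin (n + 1), if v ∉ E then 1 else 0 := Finset.sum_comm
      _ = ∑ E ∈ G, (n + 1 - r) := by
          refine Finset.sum_congr rfl fun E hE => ?_
          rw [← Finset.card_filter]
          have hfe : Finset.univ.filter (fun v => v ∉ E) = Eᶜ := by
            ext x; simp [Finset.mem_compl]
          rw [hfe, Finset.card_compl, Fintype.card_fin, hGr E hE]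
      _ = (n + 1 - r) * G.card := by
          rw [Finset.sum_const, smul_eq_mul, Nat.mul_comm]
  calc (n + 1) * minEdges r n q p
      = ∑ _v : Fin (n + 1), minEdges r n q p := by
        rw [Finset.sum_const, Finset.card_univ, Fintype.card_fin, smul_eq_mul]
    _ ≤ ∑ v : Fin (n + 1), (G.filter (fun E => v ∉ E)).card :=
        Finset.sum_le_sum fun v _ => hv v
    _ = (n + 1 - r) * G.card := hsum
    _ = (n + 1 - r) * minEdges r (n + 1) q p := by rw [hGcard]

lemma TD.ratio_mono (r q p : ℕ) (hpq : p ≤ q) :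
    Monotone (fun n => (minEdges r n q p : ℝ) / (n.choose r)) := by
  apply monotone_nat_of_le_succ
  intro n
  rcases lt_or_ge n r with hn | hn
  · rw [Nat.choose_eq_zero_of_lt hn]
    simp only [Nat.cast_zero, div_zero]
    positivity
  · have hc1 : (0 : ℝ) < n.choose r := by exact_mod_cast Nat.choose_pos hn
    have hc2 : (0 : ℝ) < (n + 1).choose r := by
      exact_mod_cast Nat.choose_pos (hn.trans (Nat.le_succ n))
    rw [div_le_div_iff₀ hc1 hc2]
    have key := TD.key_mono r q p n hpq
    have hnat : (n + 1) * (minEdges r n q p * (n + 1).choose r)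
        ≤ (n + 1) * (minEdges r (n + 1) q p * n.choose r) := by
      calc (n + 1) * (minEdges r n q p * (n + 1).choose r)
          = ((n + 1) * minEdges r n q p) * (n + 1).choose r := by ring
        _ ≤ ((n + 1 - r) * minEdges r (n + 1) q p) * (n + 1).choose r :=
            Nat.mul_le_mul key le_rfl
        _ = minEdges r (n + 1) q p * ((n + 1 - r) * (n + 1).choose r) := by ring
        _ = minEdges r (n + 1) q p * ((n + 1) * n.choose r) := by rw [TD.choose_identity]
        _ = (n + 1) * (minEdges r (n + 1) q p * n.choose r) := by ring
    have := Nat.le_of_mul_le_mul_left hnat (Nat.succ_pos n)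
    exact_mod_cast this

/-- If a family of `q`-sets contains no `k+1` pairwise disjoint members, then there is a
hitting set of size at most `k*q`. -/
lemma TD.hitting {V : Type*} [DecidableEq V] (q : ℕ) (k : ℕ) :
    ∀ (Bad : Set (Finset V)), (∀ A ∈ Bad, A.card = q) →
      (∀ f : Fin (k + 1) → Finset V, (∀ i, f i ∈ Bad) →
        ¬ Pairwise (Function.onFun Disjoint f)) →
      ∃ S : Finset V, S.card ≤ k * q ∧ ∀ A ∈ Bad, ¬ Disjoint A S := by
  induction k with
  | zero =>
    intro Bad hcard hnd
    refine ⟨∅, by simp, fun A hA => ?_⟩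
    refine ((hnd (fun _ => A) (fun _ => hA)) ?_).elim
    intro i j hij
    exact absurd (Subsingleton.elim (α := Fin 1) i j) hij
  | succ k ih =>
    intro Bad hcard hnd
    by_cases hB : ∃ A₀, A₀ ∈ Bad
    · obtain ⟨A₀, hA₀⟩ := hB
      have hnd' : ∀ f : Fin (k + 1) → Finset V,
          (∀ i, f i ∈ {A | A ∈ Bad ∧ Disjoint A A₀}) →
          ¬ Pairwise (Function.onFun Disjoint f) := by
        intro f hf hpw
        refine hnd (Fin.cases A₀ f) ?_ ?_
        · intro i
          rcases Fin.eq_zero_or_eq_succ i with rfl | ⟨j, rfl⟩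
          · simpa using hA₀
          · simpa using (hf j).1
        · intro i j hij
          rcases Fin.eq_zero_or_eq_succ i with rfl | ⟨i', rfl⟩ <;>
            rcases Fin.eq_zero_or_eq_succ j with rfl | ⟨j', rfl⟩
          · exact absurd rfl hij
          · simpa [Function.onFun] using ((hf j').2).symm
          · simpa [Function.onFun] using (hf i').2
          · have hij' : i' ≠ j' := fun h => hij (by rw [h])
            simpa [Function.onFun] using hpw hij'
      obtain ⟨S', hS'card, hS'⟩ := ih {A | A ∈ Bad ∧ Disjoint A A₀}
        (fun A hA => hcard A hA.1) hnd'
      refine ⟨S' ∪ A₀, ?_, ?_⟩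
      · calc (S' ∪ A₀).card ≤ S'.card + A₀.card := Finset.card_union_le _ _
          _ ≤ k * q + q := Nat.add_le_add hS'card (le_of_eq (hcard A₀ hA₀))
          _ = (k + 1) * q := by ring
      · intro A hA hdisj
        by_cases hd : Disjoint A A₀
        · exact hS' A ⟨hA, hd⟩ (hdisj.mono_right Finset.subset_union_left)
        · exact hd (hdisj.mono_right Finset.subset_union_right)
    · exact ⟨∅, by simp, fun A hA => absurd ⟨A, hA⟩ hB⟩

/-- The key combinatorial step: a hypergraph with the `(kq+q, k(p-1)+p)`-property on
`n + kq` vertices induces one with the `(q,p)`-property on `n` vertices. -/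
lemma TD.key_step (r q p k n : ℕ) (hp1 : 1 ≤ p) (hpq : p ≤ q) :
    minEdges r n q p ≤ minEdges r (n + k * q) (k * q + q) (k * (p - 1) + p) := by
  classical
  have hPQ : k * (p - 1) + p ≤ k * q + q :=
    Nat.add_le_add (Nat.mul_le_mul le_rfl (le_trans (Nat.sub_le p 1) hpq)) hpq
  obtain ⟨G, hGr, hGloc, hGcard⟩ :=
    TD.minEdges_spec r (n + k * q) (k * q + q) (k * (p - 1) + p) hPQ
  set Bad : Set (Finset (Fin (n + k * q))) :=
    {A | A.card = q ∧ ¬ ∃ B ⊆ A, B.card = p ∧ ∀ e ⊆ B, e.card = r → e ∈ G} with hBadDef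
  have hnd : ∀ f : Fin (k + 1) → Finset (Fin (n + k * q)), (∀ i, f i ∈ Bad) →
      ¬ Pairwise (Function.onFun Disjoint f) := by
    intro f hf hpw
    have hdisj : ∀ i ∈ (Finset.univ : Finset (Fin (k + 1))), ∀ j ∈ Finset.univ, i ≠ j →
        Disjoint (f i) (f j) := fun i _ j _ hij => hpw hij
    have hUcard : (Finset.univ.biUnion f).card = k * q + q := by
      rw [Finset.card_biUnion hdisj]
      calc ∑ i : Fin (k + 1), (f i).card = ∑ _i : Fin (k + 1), q :=
            Finset.sum_congr rfl fun i _ => (hf i).1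
        _ = (k + 1) * q := by
            rw [Finset.sum_const, Finset.card_univ, Fintype.card_fin, smul_eq_mul]
        _ = k * q + q := by ring
    obtain ⟨B, hBU, hBcard, hBcl⟩ := hGloc (Finset.univ.biUnion f) hUcard
    have hBsum : ∑ i : Fin (k + 1), (B ∩ f i).card = B.card := by
      have hBeq : B = Finset.univ.biUnion (fun i => B ∩ f i) := by
        ext x
        simp only [Finset.mem_biUnion, Finset.mem_inter, Finset.mem_univ, true_and]
        constructor
        · intro hx
          obtain ⟨i, _, hxi⟩ := Finset.mem_biUnion.mp (hBU hx)
          exact ⟨i, hx, hxi⟩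
        · rintro ⟨i, hx, _⟩; exact hx
      conv_rhs => rw [hBeq]
      rw [Finset.card_biUnion]
      intro i _ j _ hij
      exact (hpw hij).mono Finset.inter_subset_right Finset.inter_subset_right
    have hex : ∃ i : Fin (k + 1), p - 1 < (B ∩ f i).card := by
      by_contra hcon
      push_neg at hcon
      have h4 : B.card ≤ (k + 1) * (p - 1) := by
        rw [← hBsum]
        calc ∑ i : Fin (k + 1), (B ∩ f i).card ≤ ∑ _i : Fin (k + 1), (p - 1) :=
              Finset.sum_le_sum fun i _ => hcon i
          _ = (k + 1) * (p - 1) := by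
              rw [Finset.sum_const, Finset.card_univ, Fintype.card_fin, smul_eq_mul]
      rw [hBcard] at h4
      rw [add_mul, one_mul] at h4
      have h5 : k * (p - 1) + (p - 1) < k * (p - 1) + p :=
        Nat.add_lt_add_left (Nat.sub_lt hp1 one_pos) _
      exact absurd h4 (not_le.mpr h5)
    obtain ⟨i, hi⟩ := hex
    obtain ⟨B', hB'sub, hB'card⟩ := Finset.exists_subset_card_eq (s := B ∩ f i) (n := p) (by omega)
    exact (hf i).2 ⟨B', hB'sub.trans Finset.inter_subset_right, hB'card,
      fun e he hec => hBcl e (he.trans (hB'sub.trans Finset.inter_subset_left)) hec⟩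
  obtain ⟨S, hScard, hS⟩ := TD.hitting q k Bad (fun A hA => hA.1) hnd
  have hcompl : n ≤ (Sᶜ : Finset (Fin (n + k * q))).card := by
    rw [Finset.card_compl, Fintype.card_fin]
    have h1 : n + k * q - k * q ≤ n + k * q - S.card :=
      Nat.sub_le_sub_left hScard (n + k * q)
    rwa [Nat.add_sub_cancel] at h1
  obtain ⟨W, hWsub, hWcard⟩ := Finset.exists_subset_card_eq (s := Sᶜ) (n := n) hcompl
  set ι : Fin n ↪ Fin (n + k * q) := (W.orderEmbOfFin hWcard).toEmbedding with hι
  have hrange : Finset.univ.map ι = W := by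
    ext x
    simp only [Finset.mem_map, Finset.mem_univ, true_and]
    constructor
    · rintro ⟨a, rfl⟩
      exact Finset.orderEmbOfFin_mem W hWcard a
    · intro hx
      have hx' : x ∈ Set.range (W.orderEmbOfFin hWcard) := by
        rw [Finset.range_orderEmbOfFin]; exact hx
      obtain ⟨a, ha⟩ := hx'
      exact ⟨a, ha⟩
  refine le_trans (TD.pullback_le (q := q) (p := p) ι G hGr ?_)
    (by rw [← hGcard]; exact Finset.card_filter_le _ _)
  intro A hA hAsub
  by_contra hcon
  have hAbad : A ∈ Bad := ⟨hA, hcon⟩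
  refine hS A hAbad ?_
  rw [Finset.disjoint_left]
  intro x hxA hxS
  rw [hrange] at hAsub
  exact (Finset.mem_compl.mp (hWsub (hAsub hxA))) hxS

lemma TD.ratio_tendsto (r c : ℕ) :
    Tendsto (fun n : ℕ => (n.choose r : ℝ) / ((n + c).choose r)) atTop (𝓝 1) := by
  have hfac : ∀ i : ℕ,
      Tendsto (fun n : ℕ => ((n - i : ℕ) : ℝ) / ((n + c - i : ℕ) : ℝ)) atTop (𝓝 1) := by
    intro i
    have h1 : Tendsto (fun y : ℝ => y / (y + c)) atTop (𝓝 1) := by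
      have h0 : Tendsto (fun y : ℝ => (c : ℝ) / (y + c)) atTop (𝓝 0) :=
        Tendsto.div_atTop tendsto_const_nhds (tendsto_atTop_add_const_right _ _ tendsto_id)
      have heq : (fun y : ℝ => y / (y + c)) =ᶠ[atTop] fun y => 1 - (c : ℝ) / (y + c) := by
        filter_upwards [eventually_gt_atTop (0 : ℝ)] with y hy
        have hyc : y + c ≠ 0 := by positivity
        field_simp
        ring
      rw [tendsto_congr' heq]
      simpa using tendsto_const_nhds.sub h0
    have h2 : Tendsto (fun n : ℕ => ((n : ℝ) - i)) atTop atTop :=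
      tendsto_atTop_add_const_right _ _ tendsto_natCast_atTop_atTop
    have h3 := h1.comp h2
    refine Tendsto.congr' ?_ h3
    filter_upwards [eventually_ge_atTop (i + c)] with n hn
    have hi : i ≤ n := le_trans (Nat.le_add_right i c) hn
    have hic : i ≤ n + c := by omega
    simp only [Function.comp]
    rw [Nat.cast_sub hi, Nat.cast_sub hic, Nat.cast_add]
    ring_nf
  have hev : (fun n : ℕ => (n.choose r : ℝ) / ((n + c).choose r))
      =ᶠ[atTop] fun n => ∏ i ∈ Finset.range r, (((n - i : ℕ) : ℝ) / ((n + c - i : ℕ) : ℝ)) := by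
    filter_upwards [eventually_ge_atTop r] with n hn
    have hfact : (r.factorial : ℝ) ≠ 0 := by
      exact_mod_cast r.factorial_ne_zero
    rw [Finset.prod_div_distrib, ← Nat.cast_prod, ← Nat.cast_prod,
      ← Nat.descFactorial_eq_prod_range, ← Nat.descFactorial_eq_prod_range,
      Nat.descFactorial_eq_factorial_mul_choose, Nat.descFactorial_eq_factorial_mul_choose]
    push_cast
    rw [mul_div_mul_left _ _ hfact]
  rw [tendsto_congr' hev]
  have hprod := tendsto_finset_prod (Finset.range r)
    (fun i (_ : i ∈ Finset.range r) => hfac i)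
  simpa using hprod

/-- For integers q ≥ p ≥ r ≥ 2 and k ≥ 0, t_r(kq+q, k(p−1)+p) ≥ t_r(q,p). -/
theorem tDensity_degenerate_ge (r q p k : ℕ) (hr : 2 ≤ r) (hp : r ≤ p) (hq : p ≤ q) :
    tDensity r q p ≤ tDensity r (k * q + q) (k * (p - 1) + p) := by
  have hp1 : 1 ≤ p := le_trans (by omega) hp
  have hPQ : k * (p - 1) + p ≤ k * q + q :=
    Nat.add_le_add (Nat.mul_le_mul le_rfl (le_trans (Nat.sub_le p 1) hq)) hq
  have hbdd : BddAbove (Set.range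
      (fun n => (minEdges r n (k * q + q) (k * (p - 1) + p) : ℝ) / (n.choose r))) := by
    refine ⟨1, ?_⟩
    rintro x ⟨n, rfl⟩
    rcases Nat.eq_zero_or_pos (n.choose r) with h | h
    · simp only [h, Nat.cast_zero, div_zero]; exact zero_le_one
    · rw [div_le_one (by exact_mod_cast h)]
      exact_mod_cast TD.minEdges_le_choose r n (k * q + q) (k * (p - 1) + p) hPQ
  rw [tDensity, tDensity]
  apply ciSup_le
  intro m
  have hkey : ∀ n, m ≤ n → r ≤ n →
      ((minEdges r m q p : ℝ) / (m.choose r)) * ((n.choose r : ℝ) / ((n + k * q).choose r))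
        ≤ ⨆ j : ℕ, (minEdges r j (k * q + q) (k * (p - 1) + p) : ℝ) / (j.choose r) := by
    intro n hmn hrn
    have h1 : (minEdges r m q p : ℝ) / (m.choose r) ≤ (minEdges r n q p : ℝ) / (n.choose r) :=
      TD.ratio_mono r q p hq hmn
    have hrat_nonneg : (0 : ℝ) ≤ (n.choose r : ℝ) / ((n + k * q).choose r) := by positivity
    have hnc : (n.choose r : ℝ) ≠ 0 := by
      exact_mod_cast (Nat.choose_pos hrn).ne'
    have hnkc : (0 : ℝ) < ((n + k * q).choose r : ℝ) := by
      exact_mod_cast Nat.choose_pos (hrn.trans (Nat.le_add_right n (k * q)))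
    calc ((minEdges r m q p : ℝ) / (m.choose r)) * ((n.choose r : ℝ) / ((n + k * q).choose r))
        ≤ ((minEdges r n q p : ℝ) / (n.choose r)) * ((n.choose r : ℝ) / ((n + k * q).choose r)) :=
          mul_le_mul_of_nonneg_right h1 hrat_nonneg
      _ = (minEdges r n q p : ℝ) / (((n + k * q).choose r : ℝ)) := by
          field_simp
      _ ≤ (minEdges r (n + k * q) (k * q + q) (k * (p - 1) + p) : ℝ)
            / (((n + k * q).choose r : ℝ)) := by
          rw [div_le_div_iff_of_pos_right hnkc]
          exact_mod_cast TD.key_step r q p k n hp1 hq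
      _ ≤ ⨆ j : ℕ, (minEdges r j (k * q + q) (k * (p - 1) + p) : ℝ) / (j.choose r) :=
          le_ciSup hbdd (n + k * q)
  have hlim : Tendsto (fun n : ℕ =>
      ((minEdges r m q p : ℝ) / (m.choose r)) * ((n.choose r : ℝ) / ((n + k * q).choose r)))
      atTop (𝓝 (((minEdges r m q p : ℝ) / (m.choose r)) * 1)) :=
    tendsto_const_nhds.mul (TD.ratio_tendsto r (k * q))
  rw [mul_one] at hlim
  apply le_of_tendsto hlim
  filter_upwards [eventually_ge_atTop m, eventually_ge_atTop r] with n h1 h2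
  exact hkey n h1 h2
end

section
/- Let H be a hypergraph on vertex set [t] = {1,…,t} and let r ≥ 2 be an integer. Then g(H,r) = ρ(H,r). -/
open Filter

/-- For a hypergraph `H` on vertex set `V` and a weight vector `x`,
`fFun H x = max_{e ∈ H} Σ_{i ∈ e} x_i`. -/
noncomputable def fFun {V : Type*} (H : Finset (Finset V)) (x : V → ℝ) : ℝ :=
  sSup ((fun e : Finset V => ∑ i ∈ e, x i) '' (H : Set (Finset V)))

/-- `fMin H = f(H)`, the minimum of `fFun H` over the standard simplex. -/
noncomputable def fMin {V : Type*} [Fintype V] (H : Finset (Finset V)) : ℝ :=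
  sInf (fFun H '' stdSimplex ℝ V)

open Classical in
/-- For a hypergraph `H` on `V`, an integer `r` and a weight vector `x`,
`gFun H r x = Σ_{(y₁,…,y_r) ∈ V^r} (Π_i x_{y_i}) · σ_H(y₁,…,y_r)`, where
`σ_H(y) = 1` iff some edge of `H` contains all the `y_i`. -/
noncomputable def gFun {V : Type*} [Fintype V] (H : Finset (Finset V)) (r : ℕ)
    (x : V → ℝ) : ℝ :=
  ∑ y : Fin r → V, (∏ i, x (y i)) * (if ∃ e ∈ H, ∀ i, y i ∈ e then (1 : ℝ) else 0)

/-- `gMin H r = g(H,r)`, the minimum of `gFun H r` over the standard simplex. -/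
noncomputable def gMin {V : Type*} [Fintype V] (H : Finset (Finset V)) (r : ℕ) : ℝ :=
  sInf (gFun H r '' stdSimplex ℝ V)

open Classical in
/-- The blow-up construction: the r-uniform hypergraph on `Fin n` obtained from a
hypergraph `H` on `Fin t` via the partition `V_i = φ⁻¹(i)`; its edges are the
r-element sets contained in `∪_{i ∈ e} V_i` for some edge `e` of `H`. -/
noncomputable def blowup {t : ℕ} (H : Finset (Finset (Fin t))) (r n : ℕ)
    (φ : Fin n → Fin t) : Finset (Finset (Fin n)) :=
  (Finset.powersetCard r Finset.univ).filter (fun A => ∃ e ∈ H, ∀ w ∈ A, φ w ∈ e)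

/-- `rhoN H r n = ρ(H,r,n)`: the minimum edge density |G|/C(n,r) over all members
of the family F(H,r) on n vertices. -/
noncomputable def rhoN {t : ℕ} (H : Finset (Finset (Fin t))) (r n : ℕ) : ℝ :=
  sInf {y : ℝ | ∃ φ : Fin n → Fin t, y = ((blowup H r n φ).card : ℝ) / (n.choose r)}

/-- `rho H r = ρ(H,r) = lim_{n→∞} ρ(H,r,n)`, which equals the supremum since the
sequence is nondecreasing and bounded. -/
noncomputable def rho {t : ℕ} (H : Finset (Finset (Fin t))) (r : ℕ) : ℝ :=
  ⨆ n : ℕ, rhoN H r n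

open Finset

lemma sum_prod_weights {t : ℕ} {ι : Type*} [Fintype ι] [DecidableEq ι]
    (x : Fin t → ℝ) (hx : ∑ j, x j = 1) :
    ∑ φ : ι → Fin t, ∏ w, x (φ w) = 1 := by
  rw [← Fintype.piFinset_univ, Finset.sum_prod_piFinset]
  simp [hx]

lemma sum_weight_comp {t n r : ℕ} (x : Fin t → ℝ) (hx : ∑ j, x j = 1)
    (ι : Fin r → Fin n) (hι : Function.Injective ι) (F : (Fin r → Fin t) → ℝ) :
    ∑ φ : Fin n → Fin t, (∏ w, x (φ w)) * F (φ ∘ ι) =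
    ∑ z : Fin r → Fin t, (∏ i, x (z i)) * F z := by
  classical
  set C := {w : Fin n // w ∉ Set.range ι} with hC
  let e1 : Fin r ≃ Set.range ι := Equiv.ofInjective ι hι
  let e : Fin r ⊕ C ≃ Fin n :=
    (e1.sumCongr (Equiv.refl C)).trans (Equiv.sumCompl (· ∈ Set.range ι))
  have he : ∀ i, e (Sum.inl i) = ι i := fun i => rfl
  have hesymm : ∀ i, e.symm (ι i) = Sum.inl i := by
    intro i; rw [Equiv.symm_apply_eq, he]
  rw [← Equiv.sum_comp (Equiv.arrowCongr e (Equiv.refl (Fin t)))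
      (fun φ => (∏ w, x (φ w)) * F (φ ∘ ι))]
  have step1 : ∀ ψ : Fin r ⊕ C → Fin t,
      ((∏ w, x (((Equiv.arrowCongr e (Equiv.refl (Fin t))) ψ) w)) *
        F (((Equiv.arrowCongr e (Equiv.refl (Fin t))) ψ) ∘ ι))
      = ((∏ i, x (ψ (Sum.inl i))) * (∏ c : C, x (ψ (Sum.inr c)))) * F (fun i => ψ (Sum.inl i)) := by
    intro ψ
    have h1 : ((Equiv.arrowCongr e (Equiv.refl (Fin t))) ψ) = fun w => ψ (e.symm w) := rfl
    rw [h1]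
    congr 1
    · exact (Equiv.prod_comp e.symm fun u => x (ψ u)).trans (Fintype.prod_sum_type fun u => x (ψ u))
    · exact congrArg F (funext fun i => congrArg ψ (hesymm i))
  rw [Finset.sum_congr rfl (fun ψ _ => step1 ψ)]
  rw [← Equiv.sum_comp (Equiv.sumArrowEquivProdArrow (Fin r) C (Fin t)).symm]
  rw [Fintype.sum_prod_type]
  have : ∀ a : Fin r → Fin t, ∀ b : C → Fin t,
      (Equiv.sumArrowEquivProdArrow (Fin r) C (Fin t)).symm (a, b) = Sum.elim a b := fun _ _ => rfl
  simp only [this, Sum.elim_inl, Sum.elim_inr]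
  have : ∀ a : Fin r → Fin t,
      ∑ b : C → Fin t, ((∏ i, x (a i)) * (∏ c : C, x (b c))) * F a
      = (∏ i, x (a i)) * F a := by
    intro a
    rw [← Finset.sum_mul, ← Finset.mul_sum, sum_prod_weights x hx, mul_one]
  rw [Finset.sum_congr rfl (fun a _ => this a)]

open Classical in
lemma expected_blowup {t n r : ℕ} (H : Finset (Finset (Fin t))) (x : Fin t → ℝ)
    (hx : ∑ j, x j = 1) :
    ∑ φ : Fin n → Fin t, (∏ w, x (φ w)) * ((blowup H r n φ).card : ℝ)
      = (n.choose r : ℝ) * gFun H r x := by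
  have hcard : ∀ φ : Fin n → Fin t, ((blowup H r n φ).card : ℝ)
      = ∑ A ∈ Finset.powersetCard r (Finset.univ : Finset (Fin n)),
          (if ∃ e ∈ H, ∀ w ∈ A, φ w ∈ e then (1:ℝ) else 0) := by
    intro φ
    rw [blowup, ← Finset.sum_boole]
  calc ∑ φ : Fin n → Fin t, (∏ w, x (φ w)) * ((blowup H r n φ).card : ℝ)
      = ∑ φ : Fin n → Fin t, ∑ A ∈ Finset.powersetCard r (Finset.univ : Finset (Fin n)),
          (∏ w, x (φ w)) * (if ∃ e ∈ H, ∀ w ∈ A, φ w ∈ e then (1:ℝ) else 0) := by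
        refine Finset.sum_congr rfl fun φ _ => ?_
        rw [hcard, Finset.mul_sum]
    _ = ∑ A ∈ Finset.powersetCard r (Finset.univ : Finset (Fin n)),
          ∑ φ : Fin n → Fin t,
          (∏ w, x (φ w)) * (if ∃ e ∈ H, ∀ w ∈ A, φ w ∈ e then (1:ℝ) else 0) :=
        Finset.sum_comm
    _ = ∑ A ∈ Finset.powersetCard r (Finset.univ : Finset (Fin n)), gFun H r x := by
        refine Finset.sum_congr rfl fun A hA => ?_
        have hAcard : A.card = r := (Finset.mem_powersetCard.1 hA).2
        set ι : Fin r → Fin n := fun i => A.orderEmbOfFin hAcard i with hι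
        have hinj : Function.Injective ι := (A.orderEmbOfFin hAcard).injective
        have hmem : ∀ i, ι i ∈ A := fun i => A.orderEmbOfFin_mem hAcard i
        have hrange : ∀ w ∈ A, ∃ i, ι i = w := by
          intro w hw
          have : w ∈ Set.range (A.orderEmbOfFin hAcard) := by
            rw [Finset.range_orderEmbOfFin]; exact hw
          exact this
        have hiff : ∀ φ : Fin n → Fin t,
            (∃ e ∈ H, ∀ w ∈ A, φ w ∈ e) ↔ (∃ e ∈ H, ∀ i, (φ ∘ ι) i ∈ e) := by
          intro φ
          constructor
          · rintro ⟨e, he, h⟩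
            exact ⟨e, he, fun i => h _ (hmem i)⟩
          · rintro ⟨e, he, h⟩
            refine ⟨e, he, fun w hw => ?_⟩
            obtain ⟨i, rfl⟩ := hrange w hw
            exact h i
        have : ∀ φ : Fin n → Fin t,
            (∏ w, x (φ w)) * (if ∃ e ∈ H, ∀ w ∈ A, φ w ∈ e then (1:ℝ) else 0)
            = (∏ w, x (φ w)) *
              (if ∃ e ∈ H, ∀ i, (φ ∘ ι) i ∈ e then (1:ℝ) else 0) := by
          intro φ
          rw [if_congr (hiff φ) rfl rfl]
        rw [Finset.sum_congr rfl fun φ _ => this φ,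
          sum_weight_comp x hx ι hinj
            (fun z => if ∃ e ∈ H, ∀ i, z i ∈ e then (1:ℝ) else 0)]
        simp only [gFun]; congr!
    _ = (n.choose r : ℝ) * gFun H r x := by
        rw [Finset.sum_const, Finset.card_powersetCard, Finset.card_univ, Fintype.card_fin,
          nsmul_eq_mul]

lemma gFun_nonneg {V : Type*} [Fintype V] (H : Finset (Finset V)) (r : ℕ)
    {x : V → ℝ} (hx : ∀ i, 0 ≤ x i) : 0 ≤ gFun H r x := by
  classical
  rw [gFun]
  refine Finset.sum_nonneg fun y _ => mul_nonneg (Finset.prod_nonneg fun i _ => hx _) ?_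
  split <;> norm_num

lemma blowup_card_le {t : ℕ} (H : Finset (Finset (Fin t))) (r n : ℕ)
    (φ : Fin n → Fin t) : (blowup H r n φ).card ≤ n.choose r := by
  classical
  calc (blowup H r n φ).card ≤ (Finset.powersetCard r (Finset.univ : Finset (Fin n))).card :=
        Finset.card_le_card (Finset.filter_subset _ _)
    _ = n.choose r := by rw [Finset.card_powersetCard, Finset.card_univ, Fintype.card_fin]

lemma rhoN_bddBelow {t : ℕ} (H : Finset (Finset (Fin t))) (r n : ℕ) :
    ∀ y ∈ {y : ℝ | ∃ φ : Fin n → Fin t, y = ((blowup H r n φ).card : ℝ) / (n.choose r)},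
      (0:ℝ) ≤ y := by
  rintro y ⟨φ, rfl⟩
  positivity

lemma rhoN_le_gFun {t r n : ℕ} (ht : 0 < t) (H : Finset (Finset (Fin t)))
    {x : Fin t → ℝ} (hx : x ∈ stdSimplex ℝ (Fin t)) : rhoN H r n ≤ gFun H r x := by
  classical
  obtain ⟨hx0, hx1⟩ := hx
  have hbdd : BddBelow {y : ℝ | ∃ φ : Fin n → Fin t, y = ((blowup H r n φ).card : ℝ) / (n.choose r)} :=
    ⟨0, fun y hy => rhoN_bddBelow H r n y hy⟩
  have hg0 : 0 ≤ gFun H r x := gFun_nonneg H r hx0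
  -- find φ with card ≤ choose * gFun
  have key : ∃ φ : Fin n → Fin t,
      ((blowup H r n φ).card : ℝ) ≤ (n.choose r : ℝ) * gFun H r x := by
    by_contra hcon
    push_neg at hcon
    have hw1 : ∑ φ : Fin n → Fin t, ∏ w, x (φ w) = 1 := sum_prod_weights x hx1
    have hwnn : ∀ φ : Fin n → Fin t, 0 ≤ ∏ w, x (φ w) :=
      fun φ => Finset.prod_nonneg fun w _ => hx0 _
    obtain ⟨φ0, -, hφ0⟩ : ∃ φ0 ∈ (Finset.univ : Finset (Fin n → Fin t)),
        0 < ∏ w, x (φ0 w) := by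
      by_contra hall
      push_neg at hall
      have : ∑ φ : Fin n → Fin t, ∏ w, x (φ w) = 0 :=
        Finset.sum_eq_zero fun φ hφ => le_antisymm (hall φ hφ) (hwnn φ)
      rw [hw1] at this; norm_num at this
    have hlt : ∑ φ : Fin n → Fin t, (∏ w, x (φ w)) * ((n.choose r : ℝ) * gFun H r x)
        < ∑ φ : Fin n → Fin t, (∏ w, x (φ w)) * ((blowup H r n φ).card : ℝ) := by
      refine Finset.sum_lt_sum (fun φ _ => mul_le_mul_of_nonneg_left (hcon φ).le (hwnn φ))
        ⟨φ0, Finset.mem_univ _, mul_lt_mul_of_pos_left (hcon φ0) hφ0⟩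
    rw [expected_blowup H x hx1, ← Finset.sum_mul, hw1, one_mul] at hlt
    exact lt_irrefl _ hlt
  obtain ⟨φ, hφ⟩ := key
  rcases Nat.eq_zero_or_pos (n.choose r) with hc | hc
  · have h0 : ((blowup H r n φ).card : ℝ) / (n.choose r) = 0 := by
      rw [hc]; simp
    calc rhoN H r n ≤ ((blowup H r n φ).card : ℝ) / (n.choose r) :=
          csInf_le hbdd ⟨φ, rfl⟩
      _ = 0 := h0
      _ ≤ gFun H r x := hg0
  · have hcpos : (0:ℝ) < (n.choose r : ℝ) := by exact_mod_cast hc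
    calc rhoN H r n ≤ ((blowup H r n φ).card : ℝ) / (n.choose r) :=
          csInf_le hbdd ⟨φ, rfl⟩
      _ ≤ gFun H r x := by
          rw [div_le_iff₀ hcpos]
          linarith [hφ]

lemma gFun_eq_sum {t r : ℕ} (H : Finset (Finset (Fin t))) (x : Fin t → ℝ) :
    gFun H r x = ∑ c : Fin r → Fin t, (∏ i, x (c i)) *
      (if ∃ e ∈ H, ∀ i, c i ∈ e then (1:ℝ) else 0) := by
  rw [gFun]; congr!

set_option maxHeartbeats 1000000 in
lemma gFun_count {t n r : ℕ} (H : Finset (Finset (Fin t))) (φ : Fin n → Fin t) :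
    gFun H r (fun j => ((Finset.univ.filter fun v => φ v = j).card : ℝ) / n)
    = ((Finset.univ.filter
        (fun y : Fin r → Fin n => ∃ e ∈ H, ∀ i, φ (y i) ∈ e)).card : ℝ) / (n:ℝ)^r := by
  rw [gFun_eq_sum]
  have step1 : ∀ c : Fin r → Fin t,
      (∏ i, ((Finset.univ.filter fun v => φ v = c i).card : ℝ) / n)
      = (∑ y : Fin r → Fin n, ∏ i, (if φ (y i) = c i then (1:ℝ) else 0)) / (n:ℝ)^r := by
    intro c
    rw [Finset.prod_div_distrib, Finset.prod_const, Finset.card_univ, Fintype.card_fin]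
    congr 1
    have : ∀ i : Fin r, ((Finset.univ.filter fun v => φ v = c i).card : ℝ)
        = ∑ v : Fin n, (if φ v = c i then (1:ℝ) else 0) := by
      intro i; rw [Finset.sum_boole]
    rw [Finset.prod_congr rfl fun i _ => this i]
    rw [← Fintype.piFinset_univ, Finset.prod_univ_sum]
  calc (∑ c : Fin r → Fin t, (∏ i, ((Finset.univ.filter fun v => φ v = c i).card : ℝ) / n) *
          (if ∃ e ∈ H, ∀ i, c i ∈ e then (1:ℝ) else 0))
      = (∑ c : Fin r → Fin t, (∑ y : Fin r → Fin n, ∏ i, (if φ (y i) = c i then (1:ℝ) else 0)) *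
          (if ∃ e ∈ H, ∀ i, c i ∈ e then (1:ℝ) else 0)) / (n:ℝ)^r := by
        rw [Finset.sum_div]
        exact Finset.sum_congr rfl fun c _ => by rw [step1 c, div_mul_eq_mul_div]
    _ = ((Finset.univ.filter
          (fun y : Fin r → Fin n => ∃ e ∈ H, ∀ i, φ (y i) ∈ e)).card : ℝ) / (n:ℝ)^r := by
        congr 1
        rw [← Finset.sum_boole]
        rw [Finset.sum_congr rfl fun c (_ : c ∈ Finset.univ) => Finset.sum_mul _ _ _]
        rw [Finset.sum_comm]
        refine Finset.sum_congr rfl fun y _ => ?_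
        have h1 : ∀ c : Fin r → Fin t,
            (∏ i, (if φ (y i) = c i then (1:ℝ) else 0)) *
              (if ∃ e ∈ H, ∀ i, c i ∈ e then (1:ℝ) else 0)
            = (if c = fun i => φ (y i) then (1:ℝ) else 0) *
              (if ∃ e ∈ H, ∀ i, c i ∈ e then (1:ℝ) else 0) := by
          intro c
          congr 1
          by_cases hc : c = fun i => φ (y i)
          · subst hc; simp
          · have hex : ∃ i, ¬ (φ (y i) = c i) := by
              by_contra hall; push_neg at hall
              exact hc (funext fun i => (hall i).symm)
            obtain ⟨i0, hi0⟩ := hex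
            rw [if_neg hc, Finset.prod_eq_zero (Finset.mem_univ i0) (if_neg hi0 : (if φ (y i0) = c i0 then (1:ℝ) else 0) = 0)]
        rw [Finset.sum_congr rfl fun c _ => h1 c]
        rw [Finset.sum_congr rfl fun c _ => (ite_mul _ _ _ _ : _ = _)]
        simp only [one_mul, zero_mul]
        rw [Finset.sum_ite_eq' Finset.univ (fun i => φ (y i))
          (fun c => if ∃ e ∈ H, ∀ i, c i ∈ e then (1:ℝ) else 0)]
        simp

lemma inj_filter_card {m k : ℕ} :
    ((Finset.univ : Finset (Fin k → Fin m)).filter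
      (fun y => Function.Injective y)).card = m.descFactorial k := by
  classical
  rw [← Fintype.card_subtype]
  rw [Fintype.card_congr (Equiv.subtypeInjectiveEquivEmbedding (Fin k) (Fin m))]
  rw [Fintype.card_embedding_eq, Fintype.card_fin, Fintype.card_fin]

lemma count_le {t n r : ℕ} (H : Finset (Finset (Fin t))) (φ : Fin n → Fin t) (hr : 0 < r) :
    ((Finset.univ.filter
        (fun y : Fin r → Fin n => ∃ e ∈ H, ∀ i, φ (y i) ∈ e)).card : ℕ)
      ≤ r.factorial * (blowup H r n φ).card + (n^r - n.descFactorial r) := by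
  classical
  set S := Finset.univ.filter (fun y : Fin r → Fin n => ∃ e ∈ H, ∀ i, φ (y i) ∈ e) with hS
  have hsplit : (S.filter (fun y => Function.Injective y)).card
      + (S.filter (fun y => ¬ Function.Injective y)).card = S.card :=
    Finset.card_filter_add_card_filter_not _
  have hpart2 : (S.filter (fun y => ¬ Function.Injective y)).card ≤ n^r - n.descFactorial r := by
    have hsub : S.filter (fun y => ¬ Function.Injective y) ⊆
        Finset.univ.filter (fun y : Fin r → Fin n => ¬ Function.Injective y) := by
      intro y hy
      rw [Finset.mem_filter] at hy ⊢
      exact ⟨Finset.mem_univ _, hy.2⟩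
    refine (Finset.card_le_card hsub).trans ?_
    have htot : ((Finset.univ : Finset (Fin r → Fin n)).filter
          (fun y => Function.Injective y)).card
        + ((Finset.univ : Finset (Fin r → Fin n)).filter
          (fun y => ¬ Function.Injective y)).card
        = n^r := by
      rw [Finset.card_filter_add_card_filter_not, Finset.card_univ,
        Fintype.card_fun, Fintype.card_fin, Fintype.card_fin]
    rw [inj_filter_card] at htot
    omega
  have hpart1 : (S.filter (fun y => Function.Injective y)).card
      ≤ r.factorial * (blowup H r n φ).card := by
    refine Finset.card_le_mul_card_image_of_maps_to
      (f := fun y : Fin r → Fin n => Finset.image y Finset.univ)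
      (t := blowup H r n φ) ?_ r.factorial ?_
    · intro y hy
      rw [Finset.mem_filter, hS, Finset.mem_filter] at hy
      obtain ⟨⟨-, e, he, hcov⟩, hyinj⟩ := hy
      rw [blowup, Finset.mem_filter, Finset.mem_powersetCard]
      refine ⟨⟨Finset.subset_univ _, ?_⟩, e, he, ?_⟩
      · rw [Finset.card_image_of_injective _ hyinj, Finset.card_univ, Fintype.card_fin]
      · intro w hw
        obtain ⟨i, -, rfl⟩ := Finset.mem_image.1 hw
        exact hcov i
    · intro A hA
      have hAcard : A.card = r := by
        rw [blowup, Finset.mem_filter, Finset.mem_powersetCard] at hA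
        exact hA.1.2
      have hAne : A.Nonempty := by
        rw [← Finset.card_pos, hAcard]; exact hr
      obtain ⟨a0, ha0⟩ := hAne
      set g : (Fin r → Fin n) → (Fin r → ↥A) := fun y i =>
        if h : y i ∈ A then ⟨y i, h⟩ else ⟨a0, ha0⟩ with hg
      have hmapsto : ∀ y ∈ (S.filter (fun y => Function.Injective y)).filter
          (fun y => Finset.image y Finset.univ = A),
          g y ∈ Finset.univ.filter (fun f : Fin r → ↥A => Function.Injective f) := by
        intro y hy
        rw [Finset.mem_filter, Finset.mem_filter] at hy
        obtain ⟨⟨-, hyinj⟩, hyim⟩ := hy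
        have hyA : ∀ i, y i ∈ A := by
          intro i; rw [← hyim]; exact Finset.mem_image_of_mem _ (Finset.mem_univ _)
        rw [Finset.mem_filter]
        refine ⟨Finset.mem_univ _, fun i j hij => ?_⟩
        apply hyinj
        have : (g y i).1 = (g y j).1 := by rw [hij]
        simpa [hg, dif_pos (hyA i), dif_pos (hyA j)] using this
      have hinjOn : Set.InjOn g ((S.filter (fun y => Function.Injective y)).filter
          (fun y => Finset.image y Finset.univ = A)) := by
        intro y hy z hz hyz
        simp only [Finset.coe_filter, Set.mem_setOf_eq] at hy hz
        have hyA : ∀ i, y i ∈ A := by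
          intro i; rw [← hy.2]; exact Finset.mem_image_of_mem _ (Finset.mem_univ _)
        have hzA : ∀ i, z i ∈ A := by
          intro i; rw [← hz.2]; exact Finset.mem_image_of_mem _ (Finset.mem_univ _)
        funext i
        have : g y i = g z i := by rw [hyz]
        simpa [hg, dif_pos (hyA i), dif_pos (hzA i)] using congrArg Subtype.val this
      refine (Finset.card_le_card_of_injOn g hmapsto hinjOn).trans ?_
      have : (Finset.univ.filter (fun f : Fin r → ↥A => Function.Injective f)).card
          = r.factorial := by
        rw [← Fintype.card_subtype,
          Fintype.card_congr (Equiv.subtypeInjectiveEquivEmbedding (Fin r) ↥A),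
          Fintype.card_embedding_eq, Fintype.card_fin, Fintype.card_coe, hAcard,
          Nat.descFactorial_self]
      rw [this]
  omega

lemma desc_ge {n r : ℕ} (h : r ≤ n) : (n - r)^r ≤ n.descFactorial r := by
  rw [Nat.descFactorial_eq_prod_range]
  calc (n-r)^r = ∏ _i ∈ Finset.range r, (n - r) := by
        rw [Finset.prod_const, Finset.card_range]
    _ ≤ ∏ i ∈ Finset.range r, (n - i) :=
        Finset.prod_le_prod' fun i hi =>
          Nat.sub_le_sub_left (le_of_lt (Finset.mem_range.1 hi)) n

lemma error_le {n r : ℕ} (h : r ≤ n) (hn : 0 < n) :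
    ((n^r - n.descFactorial r : ℕ) : ℝ) / (n:ℝ)^r ≤ (r:ℝ)^2 / n := by
  have hd : n.descFactorial r ≤ n^r := Nat.descFactorial_le_pow n r
  have hge : ((n - r)^r : ℕ) ≤ n.descFactorial r := desc_ge h
  have hnR : (0:ℝ) < n := by exact_mod_cast hn
  have hnsR : (0:ℝ) < (n:ℝ)^r := pow_pos hnR r
  have hcast : (((n - r)^r : ℕ) : ℝ) = ((n:ℝ) - r)^r := by
    rw [Nat.cast_pow, Nat.cast_sub h]
  have hgeR : ((n:ℝ) - r)^r ≤ (n.descFactorial r : ℝ) := by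
    rw [← hcast]; exact_mod_cast hge
  have hb : (1:ℝ) + r * (-((r:ℝ)/n)) ≤ (1 + -((r:ℝ)/n))^r := by
    refine one_add_mul_le_pow ?_ r
    have h1 : (r:ℝ)/n ≤ 1 := by
      rw [div_le_one hnR]; exact_mod_cast h
    linarith
  have h1 : (1:ℝ) + -((r:ℝ)/n) = ((n:ℝ) - r)/n := by
    field_simp
    ring
  have h2 : (1:ℝ) - (r:ℝ)^2/n ≤ ((n:ℝ) - r)^r / (n:ℝ)^r := by
    calc (1:ℝ) - (r:ℝ)^2/n = 1 + r * (-((r:ℝ)/n)) := by ring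
      _ ≤ (1 + -((r:ℝ)/n))^r := hb
      _ = (((n:ℝ) - r)/n)^r := by rw [h1]
      _ = ((n:ℝ) - r)^r / (n:ℝ)^r := div_pow _ _ r
  rw [Nat.cast_sub hd, Nat.cast_pow]
  calc ((n:ℝ)^r - (n.descFactorial r : ℝ)) / (n:ℝ)^r
      ≤ ((n:ℝ)^r - ((n:ℝ) - r)^r) / (n:ℝ)^r := by
        rw [div_le_div_iff_of_pos_right hnsR]
        linarith [hgeR]
    _ = 1 - ((n:ℝ) - r)^r / (n:ℝ)^r := by
        rw [sub_div, div_self hnsR.ne']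
    _ ≤ (r:ℝ)^2 / n := by linarith [h2]

lemma xphi_mem {t n : ℕ} (hn : 0 < n) (φ : Fin n → Fin t) :
    (fun j => (((Finset.univ.filter fun v => φ v = j).card : ℝ))/n) ∈ stdSimplex ℝ (Fin t) := by
  classical
  constructor
  · intro j
    positivity
  · rw [← Finset.sum_div]
    have hsum : ∑ j, (((Finset.univ.filter fun v => φ v = j).card : ℝ)) = n := by
      have h := Finset.card_eq_sum_card_fiberwise
        (f := φ) (s := (Finset.univ : Finset (Fin n)))
        (t := (Finset.univ : Finset (Fin t))) (fun x _ => Finset.mem_univ _)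
      rw [Finset.card_univ, Fintype.card_fin] at h
      rw [← Nat.cast_sum]
      exact_mod_cast congrArg (Nat.cast : ℕ → ℝ) h.symm
    rw [hsum, div_self]
    exact_mod_cast hn.ne'

lemma gFun_le_density {t n r : ℕ} (H : Finset (Finset (Fin t))) (φ : Fin n → Fin t)
    (hrn : r ≤ n) (hr : 0 < r) :
    gFun H r (fun j => (((Finset.univ.filter fun v => φ v = j).card : ℝ))/n)
    ≤ ((blowup H r n φ).card : ℝ) / (n.choose r) + (r:ℝ)^2/n := by
  classical
  have hn : 0 < n := lt_of_lt_of_le hr hrn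
  have hnR : (0:ℝ) < n := by exact_mod_cast hn
  have hnsR : (0:ℝ) < (n:ℝ)^r := pow_pos hnR r
  have hchoose : 0 < n.choose r := Nat.choose_pos hrn
  have hchooseR : (0:ℝ) < (n.choose r : ℝ) := by exact_mod_cast hchoose
  rw [gFun_count]
  have hcount := count_le H φ hr
  set cnt := (Finset.univ.filter
      (fun y : Fin r → Fin n => ∃ e ∈ H, ∀ i, φ (y i) ∈ e)).card with hcnt
  set B := (blowup H r n φ).card with hB
  have step : (cnt : ℝ) ≤ ((r.factorial * B : ℕ) : ℝ) + ((n^r - n.descFactorial r : ℕ) : ℝ) := by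
    exact_mod_cast hcount
  have step1 : (cnt:ℝ)/(n:ℝ)^r ≤ ((r.factorial*B:ℕ):ℝ)/(n:ℝ)^r
      + ((n^r - n.descFactorial r : ℕ):ℝ)/(n:ℝ)^r := by
    rw [← add_div]
    exact (div_le_div_iff_of_pos_right hnsR).mpr step
  have step2 : ((r.factorial*B:ℕ):ℝ)/(n:ℝ)^r ≤ (B:ℝ)/(n.choose r:ℝ) := by
    rw [div_le_div_iff₀ hnsR hchooseR]
    have hnat : (r.factorial * B) * n.choose r ≤ B * n^r := by
      calc (r.factorial * B) * n.choose r = B * (r.factorial * n.choose r) := by ring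
        _ = B * n.descFactorial r := by rw [← Nat.descFactorial_eq_factorial_mul_choose]
        _ ≤ B * n^r := Nat.mul_le_mul_left _ (Nat.descFactorial_le_pow n r)
    exact_mod_cast hnat
  calc (cnt:ℝ)/(n:ℝ)^r ≤ _ := step1
    _ ≤ (B:ℝ)/(n.choose r:ℝ) + (r:ℝ)^2/n := add_le_add step2 (error_le hrn hn)


lemma stdSimplex_nonempty {t : ℕ} (ht : 0 < t) : (stdSimplex ℝ (Fin t)).Nonempty := by
  refine ⟨fun _ => (t:ℝ)⁻¹, fun i => by positivity, ?_⟩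
  rw [Finset.sum_const, Finset.card_univ, Fintype.card_fin, nsmul_eq_mul]
  rw [mul_inv_cancel₀]
  exact_mod_cast ht.ne'

/-- g(H,r) = ρ(H,r) for every hypergraph H on [t] and every r ≥ 2. -/
theorem gMin_eq_rho (t r : ℕ) (hr : 2 ≤ r) (H : Finset (Finset (Fin t))) :
    gMin H r = rho H r := by
  classical
  rcases Nat.eq_zero_or_pos t with ht | ht
  · subst ht
    have hsimplex : stdSimplex ℝ (Fin 0) = ∅ := by
      ext x
      simp only [stdSimplex, Set.mem_setOf_eq, Set.mem_empty_iff_false, iff_false, not_and]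
      intro _
      simp
    have hg : gMin H r = 0 := by
      rw [gMin, hsimplex, Set.image_empty, Real.sInf_empty]
    have hcard0 : ∀ φ : Fin 0 → Fin 0, (blowup H r 0 φ).card = 0 := by
      intro φ
      rw [blowup]
      have hpc : (Finset.powersetCard r (Finset.univ : Finset (Fin 0))) = ∅ := by
        rw [Finset.powersetCard_eq_empty, Finset.card_univ, Fintype.card_fin]
        omega
      rw [hpc, Finset.filter_empty, Finset.card_empty]
    have hrn : ∀ n, rhoN H r n = 0 := by
      intro n
      rcases Nat.eq_zero_or_pos n with hn | hn
      · subst hn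
        have hset : {y : ℝ | ∃ φ : Fin 0 → Fin 0,
            y = ((blowup H r 0 φ).card : ℝ) / ((0:ℕ).choose r)} = {0} := by
          ext y
          simp only [Set.mem_setOf_eq, Set.mem_singleton_iff]
          constructor
          · rintro ⟨φ, rfl⟩
            rw [hcard0 φ]
            simp
          · intro h
            subst h
            exact ⟨Fin.elim0, by rw [hcard0 Fin.elim0]; simp⟩
        rw [rhoN, hset, csInf_singleton]
      · have hempty : {y : ℝ | ∃ φ : Fin n → Fin 0,
            y = ((blowup H r n φ).card : ℝ) / ((n:ℕ).choose r)} = ∅ := by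
          ext y
          simp only [Set.mem_setOf_eq, Set.mem_empty_iff_false, iff_false, not_exists]
          intro φ
          exact (φ ⟨0, hn⟩).elim0
        rw [rhoN, hempty, Real.sInf_empty]
    rw [hg, rho]
    have : (fun n => rhoN H r n) = fun _ => (0:ℝ) := funext hrn
    rw [show (⨆ n : ℕ, rhoN H r n) = ⨆ _ : ℕ, (0:ℝ) from by rw [this], ciSup_const]
  · have hr0 : 0 < r := by omega
    have hSne : ∀ n : ℕ, Set.Nonempty {y : ℝ | ∃ φ : Fin n → Fin t,
        y = ((blowup H r n φ).card : ℝ) / (n.choose r)} :=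
      fun n => ⟨_, ⟨fun _ => ⟨0, ht⟩, rfl⟩⟩
    have hSbdd : ∀ n : ℕ, BddBelow {y : ℝ | ∃ φ : Fin n → Fin t,
        y = ((blowup H r n φ).card : ℝ) / (n.choose r)} :=
      fun n => ⟨0, fun y hy => rhoN_bddBelow H r n y hy⟩
    have hrhoN_le_one : ∀ n, rhoN H r n ≤ 1 := by
      intro n
      set φ0 : Fin n → Fin t := fun _ => ⟨0, ht⟩ with hφ0
      have hel : ((blowup H r n φ0).card : ℝ) / (n.choose r) ∈
          {y : ℝ | ∃ φ : Fin n → Fin t,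
            y = ((blowup H r n φ).card : ℝ) / (n.choose r)} := ⟨φ0, rfl⟩
      have hle1 : ((blowup H r n φ0).card : ℝ) / (n.choose r) ≤ 1 := by
        rcases Nat.eq_zero_or_pos (n.choose r) with hc | hc
        · have : (blowup H r n φ0).card = 0 :=
            Nat.le_zero.mp (hc ▸ blowup_card_le H r n φ0)
          rw [this, hc]
          norm_num
        · rw [div_le_one (by exact_mod_cast hc)]
          exact_mod_cast blowup_card_le H r n φ0
      exact (csInf_le (hSbdd n) hel).trans hle1
    have hbddA : BddAbove (Set.range fun n => rhoN H r n) := by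
      refine ⟨1, ?_⟩
      rintro y ⟨n, rfl⟩
      exact hrhoN_le_one n
    have hsne := stdSimplex_nonempty ht
    have himgne : (gFun H r '' stdSimplex ℝ (Fin t)).Nonempty := hsne.image _
    have himgbdd : BddBelow (gFun H r '' stdSimplex ℝ (Fin t)) := by
      refine ⟨0, ?_⟩
      rintro b ⟨x, hx, rfl⟩
      exact gFun_nonneg H r hx.1
    apply le_antisymm
    · refine le_of_forall_pos_le_add fun ε hε => ?_
      set n : ℕ := max r (⌈(r:ℝ)^2/ε⌉₊ + 1) with hn_def
      have hrn : r ≤ n := le_max_left _ _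
      have hn : 0 < n := lt_of_lt_of_le hr0 hrn
      have hnR : (0:ℝ) < n := by exact_mod_cast hn
      have herr : (r:ℝ)^2/n ≤ ε := by
        have h1 : ((r:ℝ)^2/ε) < (n:ℝ) := by
          have h2 : (⌈(r:ℝ)^2/ε⌉₊ + 1 : ℕ) ≤ n := le_max_right _ _
          have h3 : ((r:ℝ)^2/ε) ≤ (⌈(r:ℝ)^2/ε⌉₊ : ℝ) := Nat.le_ceil _
          have h4 : ((⌈(r:ℝ)^2/ε⌉₊ : ℝ) + 1) ≤ (n:ℝ) := by exact_mod_cast h2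
          linarith
        rw [div_le_iff₀ hnR]
        rw [div_lt_iff₀ hε] at h1
        linarith
      have h1 : gMin H r ≤ rhoN H r n + (r:ℝ)^2/n := by
        have key : gMin H r - (r:ℝ)^2/n ≤ rhoN H r n := by
          refine le_csInf (hSne n) ?_
          rintro y ⟨φ, rfl⟩
          have hx := xphi_mem hn φ
          have hmin : gMin H r ≤ gFun H r
              (fun j => (((Finset.univ.filter fun v => φ v = j).card : ℝ))/n) :=
            csInf_le himgbdd (Set.mem_image_of_mem _ hx)
          have hbound := gFun_le_density H φ hrn hr0
          linarith
        linarith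
      have h2 : rhoN H r n ≤ rho H r := le_ciSup hbddA n
      calc gMin H r ≤ rhoN H r n + (r:ℝ)^2/n := h1
        _ ≤ rho H r + ε := add_le_add h2 herr
    · rw [rho]
      refine ciSup_le fun n => ?_
      rw [gMin]
      refine le_csInf himgne ?_
      rintro b ⟨x, hx, rfl⟩
      exact rhoN_le_gFun ht H hx
end
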